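/- Let ε ∈ (0,1], δ ∈ (0,1), and Thresh ≥ 12·ln(24/δ)/ε². Then the geometric-type sum ∑_{j=0}^∞ 2·exp(−ε²·Thresh·2^{j}/12) is at most 4·exp(−ε²·Thresh/12), which is at most δ/6. -/

import Mathlib

/-!
With `a = ε² T / 12` and `r = exp (-a)`, the `j`-th term is `2 r ^ 2 ^ j ≤ 2 r ^ (j + 1)`, so the
series is dominated by the geometric series `2 r / (1 - r)`. The hypothesis on `T` says
`a ≥ log (24 / δ)`, i.e. `r ≤ δ / 24 < 1 / 2`, which gives `2 r / (1 - r) ≤ 4 r ≤ δ / 6`.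
-/

open Real

lemma pow_two_pow_le_pow_succ {r : ℝ} (h0 : 0 ≤ r) (h1 : r ≤ 1) (j : ℕ) :
    r ^ 2 ^ j ≤ r ^ (j + 1) :=
  pow_le_pow_of_le_one h0 h1 (Nat.lt_two_pow_self (n := j))

lemma tsum_pow_two_pow_le {r : ℝ} (h0 : 0 ≤ r) (h1 : r < 1) :
    ∑' j : ℕ, r ^ 2 ^ j ≤ r / (1 - r) := by
  have hgeom : Summable fun j : ℕ => r ^ (j + 1) :=
    (summable_geometric_of_lt_one h0 h1).comp_injective (add_left_injective 1)
  have hle := pow_two_pow_le_pow_succ h0 h1.le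
  calc ∑' j : ℕ, r ^ 2 ^ j
      ≤ ∑' j : ℕ, r ^ (j + 1) :=
        (hgeom.of_nonneg_of_le (fun j => by positivity) hle).tsum_le_tsum hle hgeom
    _ = r / (1 - r) := by
        simp only [pow_succ', tsum_mul_left, tsum_geometric_of_lt_one h0 h1, div_eq_mul_inv]

lemma exp_neg_mul_two_pow (a : ℝ) (j : ℕ) : exp (-(a * 2 ^ j)) = exp (-a) ^ 2 ^ j := by
  rw [← exp_nat_mul]
  push_cast
  ring_nf

lemma exp_neg_le_inv_of_log_le {a c : ℝ} (hc : 0 < c) (h : log c ≤ a) : exp (-a) ≤ c⁻¹ := by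
  calc exp (-a) ≤ exp (-log c) := exp_le_exp.2 (neg_le_neg h)
    _ = c⁻¹ := by rw [exp_neg, exp_log hc]

theorem geometric_tail_sum_bound_general
    (eps delta T : ℝ) (heps0 : 0 < eps)
    (hdelta0 : 0 < delta) (hdelta1 : delta < 1)
    (hT : T ≥ 12 * Real.log (24 / delta) / eps ^ 2) :
    (∑' j : ℕ, 2 * Real.exp (-(eps ^ 2 * T * 2 ^ j / 12)))
        ≤ 4 * Real.exp (-(eps ^ 2 * T / 12))
    ∧ 4 * Real.exp (-(eps ^ 2 * T / 12)) ≤ delta / 6 := by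
  set r := exp (-(eps ^ 2 * T / 12))
  have hlog : log (24 / delta) ≤ eps ^ 2 * T / 12 := by
    rw [ge_iff_le, div_le_iff₀ (by positivity)] at hT
    linarith
  have hr : r ≤ delta / 24 := by
    simpa using exp_neg_le_inv_of_log_le (by positivity) hlog
  have hr0 : 0 ≤ r := (exp_pos _).le
  have hterm (j : ℕ) : exp (-(eps ^ 2 * T * 2 ^ j / 12)) = r ^ 2 ^ j := by
    rw [← exp_neg_mul_two_pow, mul_div_right_comm]
  refine ⟨?_, by linarith⟩
  calc ∑' j : ℕ, 2 * exp (-(eps ^ 2 * T * 2 ^ j / 12))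
      = 2 * ∑' j : ℕ, r ^ 2 ^ j := by simp only [hterm, tsum_mul_left]
    _ ≤ 2 * (r / (1 - r)) := by gcongr; exact tsum_pow_two_pow_le hr0 (by linarith)
    _ ≤ 4 * r := by
        rw [mul_div_assoc', div_le_iff₀ (by linarith)]
        nlinarith

theorem geometric_tail_sum_bound
    (eps delta T : ℝ) (heps0 : 0 < eps) (heps1 : eps ≤ 1)
    (hdelta0 : 0 < delta) (hdelta1 : delta < 1)
    (hT : T ≥ 12 * Real.log (24 / delta) / eps ^ 2) :
    (∑' j : ℕ, 2 * Real.exp (-(eps ^ 2 * T * 2 ^ j / 12)))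
        ≤ 4 * Real.exp (-(eps ^ 2 * T / 12))
    ∧ 4 * Real.exp (-(eps ^ 2 * T / 12)) ≤ delta / 6 :=
  geometric_tail_sum_bound_general eps delta T heps0 hdelta0 hdelta1 hT
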